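/- arXiv:2407.21261 — 2 statements merged into one kernel-verified Lean document; each statement's English description precedes it below -/
import Mathlib

section
/- Let f ∈ L¹(S) with f(s) > 0 a.e., so J(f) is the constant function f* with value ‖f‖₁. If u* ∈ L^∞(S) satisfies u*(s) > f*(s) a.e. (i.e., u* > ‖f‖₁ a.e.), then u* ∉ D̂*J(f, f*)(f**), where f** is the functional k* ↦ ∫ k* f dμ on L^∞. -/
open MeasureTheory
open scoped ENNReal Topology

variable {S : Type*} [MeasurableSpace S]

/-- The `L¹` norm of a function, `‖h‖₁ = ∫ |h| dμ`. -/
noncomputable def norm1 (μ : Measure S) (h : S → ℝ) : ℝ := ∫ s, |h s| ∂μ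

/-- The `L^∞` norm of a function (essential supremum). -/
noncomputable def normInf (μ : Measure S) (h : S → ℝ) : ℝ := (eLpNorm h ⊤ μ).toReal

/-- The normalized duality mapping `J : L¹(S) ⇉ L^∞(S)`:
`J(h) = {g ∈ L^∞ : ⟨g, h⟩ = ‖g‖_∞‖h‖₁ = ‖h‖₁² = ‖g‖_∞²}`. -/
noncomputable def JsetL1 (μ : Measure S) (h : S → ℝ) : Set (S → ℝ) :=
  {g | MemLp g ⊤ μ ∧ (∫ s, h s * g s ∂μ) = (norm1 μ h) ^ 2 ∧
    eLpNorm g ⊤ μ = ENNReal.ofReal (norm1 μ h)}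

/-- `k ∈ D̂*J(f, f*)(γ)`: the regular (Fréchet) coderivative condition
`limsup_{(g,g*)→(f,f*), g*∈J(g)} (⟨k, g-f⟩ - ⟨γ, g*-f*⟩)/(‖g-f‖₁ + ‖g*-f*‖_∞) ≤ 0`. -/
noncomputable def memMDL1 (μ : Measure S) (f fstar : S → ℝ) (γ : (S → ℝ) → ℝ)
    (k : S → ℝ) : Prop :=
  ∀ ε > (0 : ℝ), ∃ δ > (0 : ℝ), ∀ g gstar : S → ℝ, gstar ∈ JsetL1 μ g →
    norm1 μ (fun s => g s - f s) < δ → normInf μ (fun s => gstar s - fstar s) < δ →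
    ((∫ s, k s * (g s - f s) ∂μ) - γ (fun s => gstar s - fstar s)) /
      (norm1 μ (fun s => g s - f s) + normInf μ (fun s => gstar s - fstar s)) ≤ ε

/-! Perturb `f` upward on `E`: `g = f + t • 𝟙_E` is still positive, so `g* = ‖g‖₁` lies in `J(g)`,
and both `‖g - f‖₁` and `‖g* - f*‖_∞` equal `t μ(E)`. The pairing gain
`⟨u*, g - f⟩ - ⟨g* - f*, f⟩ = t (∫_E u* - μ(E) ‖f‖₁)` is at least `t μ(E) b`, so the coderivative
quotient stays above `b / 2` however small `t` is. -/

open Set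

variable {μ : Measure S}

lemma norm1_nonneg (h : S → ℝ) : 0 ≤ norm1 μ h :=
  integral_nonneg fun _ => abs_nonneg _

lemma norm1_eq_integral_of_ae_nonneg {h : S → ℝ} (hh : 0 ≤ᵐ[μ] h) :
    norm1 μ h = ∫ s, h s ∂μ :=
  integral_congr_ae <| hh.mono fun _ hs => abs_of_nonneg hs

lemma norm1_indicator_const {E : Set S} (hE : MeasurableSet E) (t : ℝ) :
    norm1 μ (E.indicator fun _ => t) = |t| * μ.real E := by
  simp only [norm1, ← Real.norm_eq_abs, norm_indicator_eq_indicator_norm]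
  rw [integral_indicator_const _ hE, smul_eq_mul, mul_comm]

lemma normInf_const (hμ : μ ≠ 0) (c : ℝ) : normInf μ (fun _ => c) = |c| := by
  rw [normInf, eLpNorm_exponent_top, eLpNormEssSup_const _ hμ, Real.enorm_eq_ofReal_abs,
    ENNReal.toReal_ofReal (abs_nonneg c)]

lemma const_norm1_mem_JsetL1 (hμ : μ ≠ 0) {h : S → ℝ} (hh : 0 ≤ᵐ[μ] h) :
    (fun _ => norm1 μ h) ∈ JsetL1 μ h := by
  refine ⟨memLp_top_const _, ?_, ?_⟩
  · rw [integral_mul_const, ← norm1_eq_integral_of_ae_nonneg hh, sq]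
  · rw [eLpNorm_exponent_top, eLpNormEssSup_const _ hμ, Real.enorm_eq_ofReal (norm1_nonneg h)]

lemma integrableOn_of_memLp_top {u : S → ℝ} (hu : MemLp u ⊤ μ) {E : Set S} (hEfin : μ E ≠ ⊤) :
    IntegrableOn u E μ :=
  have : IsFiniteMeasure (μ.restrict E) := isFiniteMeasure_restrict.2 hEfin
  (hu.restrict E).integrable le_top

section Perturbation

variable {f : S → ℝ} {E : Set S} {t : ℝ}

lemma norm1_add_indicator_const_sub (hE : MeasurableSet E) (ht : 0 ≤ t) :
    norm1 μ (fun s => (f + E.indicator fun _ => t) s - f s) = t * μ.real E := by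
  simp only [Pi.add_apply, add_sub_cancel_left]
  rw [norm1_indicator_const hE, abs_of_nonneg ht]

lemma norm1_add_indicator_const_sub_norm1 (hf : Integrable f μ) (hf0 : 0 ≤ᵐ[μ] f)
    (hE : MeasurableSet E) (hEfin : μ E ≠ ⊤) (ht : 0 ≤ t) :
    norm1 μ (f + E.indicator fun _ => t) - norm1 μ f = t * μ.real E := by
  have hsum : 0 ≤ᵐ[μ] f + E.indicator fun _ => t :=
    hf0.mono fun s hs => add_nonneg hs (indicator_nonneg (fun _ _ => ht) s)
  rw [norm1_eq_integral_of_ae_nonneg hsum, norm1_eq_integral_of_ae_nonneg hf0,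
    integral_add' hf ((integrable_indicator_iff hE).2 (integrableOn_const hEfin)),
    integral_indicator_const _ hE, smul_eq_mul, mul_comm, add_sub_cancel_left]

lemma normInf_norm1_add_indicator_const_sub_norm1 (hμ : μ ≠ 0) (hf : Integrable f μ)
    (hf0 : 0 ≤ᵐ[μ] f) (hE : MeasurableSet E) (hEfin : μ E ≠ ⊤) (ht : 0 ≤ t) :
    normInf μ (fun _ => norm1 μ (f + E.indicator fun _ => t) - norm1 μ f) = t * μ.real E := by
  rw [norm1_add_indicator_const_sub_norm1 hf hf0 hE hEfin ht, normInf_const hμ,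
    abs_of_nonneg (mul_nonneg ht measureReal_nonneg)]

lemma coderivative_quotient_add_indicator_const (hμ : μ ≠ 0) (hf : Integrable f μ)
    (hf0 : 0 ≤ᵐ[μ] f) (hE : MeasurableSet E) (hEfin : μ E ≠ ⊤) (ht : 0 < t) (u : S → ℝ) :
    ((∫ s, u s * ((f + E.indicator fun _ => t) s - f s) ∂μ) -
        ∫ s, (norm1 μ (f + E.indicator fun _ => t) - norm1 μ f) * f s ∂μ) /
      (norm1 μ (fun s => (f + E.indicator fun _ => t) s - f s) +
        normInf μ (fun _ => norm1 μ (f + E.indicator fun _ => t) - norm1 μ f)) =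
      ((∫ s in E, u s ∂μ) - μ.real E * norm1 μ f) / (2 * μ.real E) := by
  have hpair : ∫ s, u s * ((f + E.indicator fun _ => t) s - f s) ∂μ = (∫ s in E, u s ∂μ) * t := by
    simp only [Pi.add_apply, add_sub_cancel_left, ← indicator_mul_right]
    rw [integral_indicator hE, integral_mul_const]
  rw [hpair, norm1_add_indicator_const_sub hE ht.le,
    normInf_norm1_add_indicator_const_sub_norm1 hμ hf hf0 hE hEfin ht.le,
    norm1_add_indicator_const_sub_norm1 hf hf0 hE hEfin ht.le, integral_const_mul,
    ← norm1_eq_integral_of_ae_nonneg hf0]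
  field_simp
  ring

end Perturbation

theorem ustar_not_mem_coderivative_L1_general (μ : Measure S)
    (f : S → ℝ) (hfi : Integrable f μ)
    (hfpos : ∀ᵐ s ∂μ, 0 < f s)
    (ustar : S → ℝ) (hu : MemLp ustar ⊤ μ)
    (b : ℝ) (hb : 0 < b)
    (E : Set S) (hE : MeasurableSet E) (hEu : E ⊆ {s | norm1 μ f + b < ustar s})
    (hE0 : 0 < μ E) (hEfin : μ E < ⊤) :
    ¬ memMDL1 μ f (fun _ => norm1 μ f) (fun h => ∫ s, h s * f s ∂μ) ustar := by
  intro hmem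
  have hμ : μ ≠ 0 := fun h => by simp [h] at hE0
  have hf0 : 0 ≤ᵐ[μ] f := hfpos.mono fun _ hs => hs.le
  have hc : 0 < μ.real E := ENNReal.toReal_pos hE0.ne' hEfin.ne
  obtain ⟨δ, hδ, hδ_spec⟩ := hmem (b / 4) (by positivity)
  set t := δ / (2 * μ.real E)
  have ht : 0 < t := by positivity
  have htc : t * μ.real E < δ := by simp only [t]; field_simp; linarith
  have hg0 : 0 ≤ᵐ[μ] f + E.indicator fun _ => t :=
    hf0.mono fun s hs => add_nonneg hs (indicator_nonneg (fun _ _ => ht.le) s)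
  have hquot := hδ_spec _ _ (const_norm1_mem_JsetL1 hμ hg0)
    ((norm1_add_indicator_const_sub hE ht.le).trans_lt htc)
    ((normInf_norm1_add_indicator_const_sub_norm1 hμ hfi hf0 hE hEfin.ne ht.le).trans_lt htc)
  rw [coderivative_quotient_add_indicator_const hμ hfi hf0 hE hEfin.ne ht] at hquot
  have huE : (norm1 μ f + b) * μ.real E ≤ ∫ s in E, ustar s ∂μ :=
    setIntegral_ge_of_const_le_real hE hEfin.ne (fun _ hs => (hEu hs).le)
      (integrableOn_of_memLp_top hu hEfin.ne)
  rw [div_le_iff₀ (by positivity)] at hquot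
  linarith [mul_pos hb hc]

/-- let `f ∈ L¹(S)` with `f > 0` a.e., so `J(f)` is the constant function
`f* = ‖f‖₁`.  If `u* ∈ L^∞` satisfies `u* > ‖f‖₁` a.e. (and there are `b > 0` and
`E ⊆ {u* > ‖f‖₁ + b}` with `0 < μ E < ∞`), then `u* ∉ D̂*J(f, f*)(f**)`, where
`f**` is the functional `k* ↦ ∫ k* f dμ` on `L^∞`. -/
theorem ustar_not_mem_coderivative_L1 (μ : Measure S)
    (f : S → ℝ) (hfm : Measurable f) (hfi : Integrable f μ)
    (hfpos : ∀ᵐ s ∂μ, 0 < f s)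
    (ustar : S → ℝ) (hu : MemLp ustar ⊤ μ)
    (hgt : ∀ᵐ s ∂μ, norm1 μ f < ustar s)
    (b : ℝ) (hb : 0 < b)
    (E : Set S) (hE : MeasurableSet E) (hEu : E ⊆ {s | norm1 μ f + b < ustar s})
    (hE0 : 0 < μ E) (hEfin : μ E < ⊤) :
    ¬ memMDL1 μ f (fun _ => norm1 μ f) (fun h => ∫ s, h s * f s ∂μ) ustar :=
  ustar_not_mem_coderivative_L1_general μ f hfi hfpos ustar hu b hb E hE hEu hE0 hEfin
end

section
/- Let f ∈ C[0,1] and λ ∈ rca[0,1] with ⟨λ, f⟩ ≠ 0. Then for any μ ∈ J(f), λ ∉ D̂*J(f, μ)(θ**): choosing g_t = (1±t)f (sign according to the sign of ⟨λ, f⟩) and γ_t = (1±t)μ ∈ J(g_t), the quotient ⟨λ, g_t − f⟩/(‖g_t − f‖ + ‖γ_t − μ‖) converges to |⟨λ, f⟩|/(2‖f‖) > 0 as t ↓ 0. -/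
/-!
`J` is positively homogeneous, so `((1 + c t) f, (1 + c t) μ)` stays in the graph of `J` for
small `t > 0` and tends to `(f, μ)`. Along this ray the numerator `c t ⟨λ, f⟩` and the
denominator `2 t ‖f‖` of the coderivative quotient are both linear in `t`, so the quotient is
the constant `|⟨λ, f⟩| / (2‖f‖) > 0`, contradicting the `limsup ≤ 0` defining `D̂*J(f, μ)`.
-/

open MeasureTheory
open scoped Topology

/-- The unit interval `[0,1]` as a compact metric measurable space. -/
abbrev I01 := Set.Icc (0 : ℝ) 1

/-- Integration of a function against a signed (regular Borel) measure, via its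
Jordan decomposition: `∫ f dν = ∫ f dν⁺ − ∫ f dν⁻`. -/
noncomputable def sInt (ν : SignedMeasure I01) (f : I01 → ℝ) : ℝ :=
  (∫ x, f x ∂ν.toJordanDecomposition.posPart) -
    ∫ x, f x ∂ν.toJordanDecomposition.negPart

/-- The total variation norm of a signed measure on `[0,1]`. -/
noncomputable def tvNorm (ν : SignedMeasure I01) : ℝ :=
  (ν.totalVariation Set.univ).toReal

/-- The normalized duality mapping `J : C[0,1] ⇉ rca[0,1]`:
`J(f) = {ν : ⟨ν, f⟩ = ‖ν‖‖f‖ = ‖f‖² = ‖ν‖²}`. -/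
noncomputable def JsetC (f : C(I01, ℝ)) : Set (SignedMeasure I01) :=
  {ν | sInt ν (fun s => f s) = ‖f‖ ^ 2 ∧ tvNorm ν = ‖f‖}

/-- The maximizing set `M(f) = {t ∈ [0,1] : |f(t)| = ‖f‖}`. -/
def maxSet (f : C(I01, ℝ)) : Set I01 := {t | |f t| = ‖f‖}

/-- `λ ∈ D̂*J(f, μ)(Φ)`: the regular (Fréchet) coderivative condition for the set-valued
normalized duality mapping `J` on `C[0,1]`, i.e.
`limsup_{(g,γ)→(f,μ), γ∈J(g)} (⟨λ, g−f⟩ − ⟨Φ, γ−μ⟩)/(‖g−f‖ + ‖γ−μ‖) ≤ 0`. -/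
noncomputable def memMDC (f : C(I01, ℝ)) (μ : SignedMeasure I01)
    (Φ : SignedMeasure I01 → ℝ) (lam : SignedMeasure I01) : Prop :=
  ∀ ε > (0 : ℝ), ∃ δ > (0 : ℝ), ∀ (g : C(I01, ℝ)) (γ : SignedMeasure I01),
    γ ∈ JsetC g → ‖g - f‖ < δ → tvNorm (γ - μ) < δ →
    (sInt lam (fun s => g s - f s) - Φ (γ - μ)) / (‖g - f‖ + tvNorm (γ - μ)) ≤ ε

open Filter

lemma sInt_const_mul (ν : SignedMeasure I01) (a : ℝ) (h : I01 → ℝ) :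
    sInt ν (fun s => a * h s) = a * sInt ν h := by
  simp [sInt, integral_const_mul, mul_sub]

lemma sInt_smul_of_nonneg {a : ℝ} (ha : 0 ≤ a) (ν : SignedMeasure I01) (h : I01 → ℝ) :
    sInt (a • ν) h = a * sInt ν h := by
  simp only [sInt, SignedMeasure.toJordanDecomposition_smul_real,
    JordanDecomposition.real_smul_posPart_nonneg _ _ ha,
    JordanDecomposition.real_smul_negPart_nonneg _ _ ha, integral_smul_nnreal_measure,
    NNReal.smul_def, Real.coe_toNNReal a ha, smul_eq_mul]
  ring

lemma tvNorm_smul_of_nonneg {a : ℝ} (ha : 0 ≤ a) (ν : SignedMeasure I01) :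
    tvNorm (a • ν) = a * tvNorm ν := by
  simp only [tvNorm, SignedMeasure.totalVariation,
    SignedMeasure.toJordanDecomposition_smul_real,
    JordanDecomposition.real_smul_posPart_nonneg _ _ ha,
    JordanDecomposition.real_smul_negPart_nonneg _ _ ha, Measure.coe_add, Pi.add_apply,
    Measure.smul_apply, ENNReal.smul_def, smul_eq_mul]
  rw [← mul_add, ENNReal.toReal_mul]
  simp [Real.coe_toNNReal a ha]

lemma tvNorm_smul (a : ℝ) (ν : SignedMeasure I01) : tvNorm (a • ν) = |a| * tvNorm ν := by
  rcases le_or_gt 0 a with ha | ha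
  · rw [abs_of_nonneg ha, tvNorm_smul_of_nonneg ha]
  · have hneg : a • ν = -((-a) • ν) := by ext i hi; simp
    have htv : tvNorm (-((-a) • ν)) = tvNorm ((-a) • ν) := by
      simp [tvNorm, SignedMeasure.totalVariation_neg]
    rw [hneg, htv, tvNorm_smul_of_nonneg (neg_nonneg.2 ha.le), abs_of_neg ha]

lemma smul_mem_JsetC {f : C(I01, ℝ)} {μ : SignedMeasure I01} (hμ : μ ∈ JsetC f)
    {a : ℝ} (ha : 0 ≤ a) : a • μ ∈ JsetC (a • f) := by
  have hnorm : ‖a • f‖ = a * ‖f‖ := by rw [norm_smul, Real.norm_of_nonneg ha]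
  refine ⟨?_, by rw [tvNorm_smul_of_nonneg ha, hμ.2, hnorm]⟩
  rw [sInt_smul_of_nonneg ha]
  simp only [ContinuousMap.smul_apply, smul_eq_mul]
  rw [sInt_const_mul, hμ.1, hnorm]
  ring

lemma not_memMDC_of_tendsto {ι : Type*} {l : Filter ι} [l.NeBot] {f : C(I01, ℝ)}
    {μ lam : SignedMeasure I01} {Φ : SignedMeasure I01 → ℝ}
    {g : ι → C(I01, ℝ)} {γ : ι → SignedMeasure I01} {q : ℝ} (hq : 0 < q)
    (hmem : ∀ᶠ i in l, γ i ∈ JsetC (g i))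
    (hg : Tendsto (fun i => ‖g i - f‖) l (𝓝 0))
    (hγ : Tendsto (fun i => tvNorm (γ i - μ)) l (𝓝 0))
    (hquot : Tendsto (fun i => (sInt lam (fun s => g i s - f s) - Φ (γ i - μ)) /
      (‖g i - f‖ + tvNorm (γ i - μ))) l (𝓝 q)) :
    ¬ memMDC f μ Φ lam := by
  intro h
  obtain ⟨δ, hδ, hd⟩ := h (q / 2) (half_pos hq)
  obtain ⟨i, hi, hgi, hγi, hqi⟩ := (hmem.and <| (hg.eventually (gt_mem_nhds hδ)).and <|
    (hγ.eventually (gt_mem_nhds hδ)).and (hquot.eventually (lt_mem_nhds (half_lt_self hq)))).exists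
  linarith [hd (g i) (γ i) hi hgi hγi]

section Ray

variable (f : C(I01, ℝ)) (μ lam : SignedMeasure I01) (c : ℝ)

lemma sInt_ray_sub (t : ℝ) :
    sInt lam (fun s => ((1 + c * t) • f) s - f s) = c * t * sInt lam (fun s => f s) := by
  rw [← sInt_const_mul]
  congr 1
  funext s
  simp only [ContinuousMap.smul_apply, smul_eq_mul]
  ring

lemma norm_ray_sub (t : ℝ) : ‖(1 + c * t) • f - f‖ = |c * t| * ‖f‖ := by
  rw [show (1 + c * t) • f - f = (c * t) • f by module, norm_smul, Real.norm_eq_abs]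

lemma tvNorm_ray_sub (t : ℝ) : tvNorm ((1 + c * t) • μ - μ) = |c * t| * tvNorm μ := by
  rw [show (1 + c * t) • μ - μ = (c * t) • μ by module, tvNorm_smul]

lemma ray_quotient_eq (hμ : tvNorm μ = ‖f‖) (hc : |c| = 1) {t : ℝ} (ht : 0 < t) :
    sInt lam (fun s => ((1 + c * t) • f) s - f s) /
        (‖(1 + c * t) • f - f‖ + tvNorm ((1 + c * t) • μ - μ)) =
      c * sInt lam (fun s => f s) / (2 * ‖f‖) := by
  rw [sInt_ray_sub, norm_ray_sub, tvNorm_ray_sub, hμ, abs_mul, hc, one_mul, abs_of_pos ht,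
    ← two_mul, mul_left_comm, mul_right_comm, mul_comm _ t, mul_div_mul_left _ _ ht.ne']

end Ray

lemma sign_mul_self_eq_abs (L : ℝ) : (if 0 < L then 1 else -1) * L = |L| := by
  split_ifs with h
  · rw [one_mul, abs_of_pos h]
  · rw [abs_of_nonpos (not_lt.1 h), neg_one_mul]

/-- let `f ∈ C[0,1]` and `λ ∈ rca[0,1]` with `⟨λ, f⟩ ≠ 0`.  Then for any
`μ ∈ J(f)`, `λ ∉ D̂*J(f, μ)(θ**)`: with `g_t = (1 ± t)f` (sign according to `⟨λ, f⟩`) and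
`γ_t = (1 ± t)μ ∈ J(g_t)`, the quotient `⟨λ, g_t − f⟩/(‖g_t − f‖ + ‖γ_t − μ‖)` converges
to `|⟨λ, f⟩|/(2‖f‖) > 0` as `t ↓ 0`. -/
theorem lam_not_mem_coderivative_C01 (f : C(I01, ℝ)) (lam : SignedMeasure I01)
    (hlf : sInt lam (fun s => f s) ≠ 0)
    (μ : SignedMeasure I01) (hμ : μ ∈ JsetC f)
    (c : ℝ) (hc : c = if 0 < sInt lam (fun s => f s) then 1 else -1) :
    Filter.Tendsto
      (fun t : ℝ =>
        sInt lam (fun s => ((1 + c * t) • f) s - f s) /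
          (‖(1 + c * t) • f - f‖ + tvNorm ((1 + c * t) • μ - μ)))
      (𝓝[>] 0) (𝓝 (|sInt lam (fun s => f s)| / (2 * ‖f‖))) ∧
    0 < |sInt lam (fun s => f s)| / (2 * ‖f‖) ∧
    ¬ memMDC f μ (fun _ => 0) lam := by
  have hf : f ≠ 0 := by rintro rfl; simp [sInt] at hlf
  have habs_c : |c| = 1 := by rw [hc]; split_ifs <;> simp
  have hquot : Tendsto (fun t : ℝ => sInt lam (fun s => ((1 + c * t) • f) s - f s) /
      (‖(1 + c * t) • f - f‖ + tvNorm ((1 + c * t) • μ - μ)))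
      (𝓝[>] 0) (𝓝 (|sInt lam (fun s => f s)| / (2 * ‖f‖))) := by
    refine tendsto_const_nhds.congr' (eventually_nhdsWithin_of_forall fun t ht => ?_)
    dsimp only
    rw [ray_quotient_eq f μ lam c hμ.2 habs_c ht, hc, sign_mul_self_eq_abs]
  have hpos : 0 < |sInt lam (fun s => f s)| / (2 * ‖f‖) := by positivity
  have hvanish (C : ℝ) : Tendsto (fun t : ℝ => |c * t| * C) (𝓝[>] 0) (𝓝 0) :=
    (((continuous_const.mul continuous_id).abs.mul continuous_const).tendsto' 0 0
      (by simp)).mono_left nhdsWithin_le_nhds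
  refine ⟨hquot, hpos, not_memMDC_of_tendsto hpos ?_ ?_ ?_ (by simpa only [sub_zero])⟩
  · filter_upwards [Ioo_mem_nhdsGT one_pos] with t ht
    refine smul_mem_JsetC hμ ?_
    have := neg_abs_le (c * t)
    rw [abs_mul, habs_c, one_mul, abs_of_pos ht.1] at this
    linarith [ht.2]
  · simpa only [norm_ray_sub] using hvanish ‖f‖
  · simpa only [tvNorm_ray_sub] using hvanish (tvNorm μ)
end
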